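/- arXiv:1902.05187 — 3 statements merged into one kernel-verified Lean document; each statement's English description precedes it below -/
import Mathlib

section
/- Let a ∈ ℝ and let u ∈ C²(ℝⁿ₊) satisfy div(yₙ^a ∇u) = 0 in ℝⁿ₊. Then for every x ∈ ∂ℝⁿ₊ and every λ > 0, the Kelvin-type transform u_{x,λ}(y) = (λ/|y−x|)^{n−2+a} u(x + λ²(y−x)/|y−x|²) satisfies div(yₙ^a ∇u_{x,λ}) = 0 in ℝⁿ₊. -/
open Real Filter

/-- Partial derivative of `u` in the `i`-th coordinate direction. -/
noncomputable def partialD {n : ℕ} (i : Fin n) (u : EuclideanSpace ℝ (Fin n) → ℝ)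
    (y : EuclideanSpace ℝ (Fin n)) : ℝ :=
  fderiv ℝ u y (EuclideanSpace.single i 1)

/-- The Laplacian of `u`, as a sum of repeated partial derivatives. -/
noncomputable def lapl {n : ℕ} (u : EuclideanSpace ℝ (Fin n) → ℝ)
    (y : EuclideanSpace ℝ (Fin n)) : ℝ :=
  ∑ j, partialD j (fun z => partialD j u z) y

/-- The weighted operator `div(yᵢ^a ∇u) = yᵢ^a Δu + a yᵢ^(a-1) ∂u/∂yᵢ`,
where `i` plays the role of the last coordinate. -/
noncomputable def divA {n : ℕ} (i : Fin n) (a : ℝ) (u : EuclideanSpace ℝ (Fin n) → ℝ)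
    (y : EuclideanSpace ℝ (Fin n)) : ℝ :=
  (y i) ^ a * lapl u y + a * (y i) ^ (a - 1) * partialD i u y

/-- The inversion `y ↦ x + λ²(y-x)/|y-x|²` centered at `x` with radius `λ`. -/
noncomputable def inversion {n : ℕ} (x : EuclideanSpace ℝ (Fin n)) (lam : ℝ)
    (y : EuclideanSpace ℝ (Fin n)) : EuclideanSpace ℝ (Fin n) :=
  x + (lam ^ 2 / ‖y - x‖ ^ 2) • (y - x)

/-- The Kelvin-type transform `u_{x,λ}(y) = (λ/|y-x|)^(n-2+a) u(x + λ²(y-x)/|y-x|²)`. -/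
noncomputable def kelvin {n : ℕ} (a : ℝ) (x : EuclideanSpace ℝ (Fin n)) (lam : ℝ)
    (u : EuclideanSpace ℝ (Fin n) → ℝ) (y : EuclideanSpace ℝ (Fin n)) : ℝ :=
  (lam / ‖y - x‖) ^ ((n : ℝ) - 2 + a) * u (inversion x lam y)

/-!
Write `u_{x,λ} = f · (u ∘ I)` with `f y = (λ/|y-x|)^p`, `p = n - 2 + a`, and `I` the inversion.
Since `DI(y)` is `λ²/|y-x|²` times the reflection in `(y-x)^⊥`, the chain rule gives
`Δ(u ∘ I) = (λ/|y-x|)⁴ (Δu)∘I - 2(n-2) λ² |y-x|⁻⁴ ∇u(I y)·(y-x)`, while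
`∇f = -p f (y-x)/|y-x|²` and `Δf = p(p+2-n) f/|y-x|²`. Expanding `div(yₙ^a ∇(f · (u∘I)))` by the
product rule and using `xₙ = 0` (so `(y-x)ₙ = yₙ` and `(I y)ₙ = λ² yₙ/|y-x|²`), the terms in `u∘I`
and in `∇u(I y)·(y-x)` cancel exactly for this `p`, leaving
`div(yₙ^a ∇u_{x,λ})(y) = (λ/|y-x|)^(n+2-a) div(yₙ^a ∇u)(I y)`.
-/

open Topology

namespace EuclideanSpace

variable {n : ℕ}

theorem sum_mul_apply_single (L : EuclideanSpace ℝ (Fin n) →L[ℝ] ℝ)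
    (v : EuclideanSpace ℝ (Fin n)) :
    ∑ j, v j * L (single j 1) = L v := by
  conv_rhs => rw [← (basisFun (Fin n) ℝ).sum_repr v]
  simp [map_sum, basisFun_apply]

@[simp]
theorem inner_single_one_right (v : EuclideanSpace ℝ (Fin n)) (j : Fin n) :
    inner ℝ v (single j (1 : ℝ)) = v j := by
  simp [inner_single_right]

theorem sum_sq_apply (v : EuclideanSpace ℝ (Fin n)) : ∑ j, v j ^ 2 = ‖v‖ ^ 2 := by
  simp [norm_sq_eq]

end EuclideanSpace

open EuclideanSpace

section PartialDerivatives

variable {n : ℕ} {u f g : EuclideanSpace ℝ (Fin n) → ℝ} {y : EuclideanSpace ℝ (Fin n)}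

theorem partialD_eq_of_hasFDerivAt {L : EuclideanSpace ℝ (Fin n) →L[ℝ] ℝ}
    (h : HasFDerivAt u L y) (j : Fin n) : partialD j u y = L (single j 1) := by
  rw [partialD, h.fderiv]

theorem partialD_congr_of_eventuallyEq (h : f =ᶠ[𝓝 y] g) (j : Fin n) :
    partialD j f y = partialD j g y := by
  rw [partialD, partialD, h.fderiv_eq]

theorem sum_mul_partialD (v : EuclideanSpace ℝ (Fin n)) :
    ∑ j, v j * partialD j u y = fderiv ℝ u y v :=
  sum_mul_apply_single _ v

theorem differentiableAt_fderiv_of_contDiffAt_two (hu : ContDiffAt ℝ 2 u y) :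
    DifferentiableAt ℝ (fderiv ℝ u) y :=
  (hu.fderiv_right (m := 1) (by norm_num)).differentiableAt one_ne_zero

theorem differentiableAt_partialD (hu : ContDiffAt ℝ 2 u y) (j : Fin n) :
    DifferentiableAt ℝ (fun z => partialD j u z) y :=
  (differentiableAt_fderiv_of_contDiffAt_two hu).clm_apply (differentiableAt_const _)

theorem lapl_eq_sum_fderiv_fderiv (hu : DifferentiableAt ℝ (fderiv ℝ u) y) :
    lapl u y = ∑ j, fderiv ℝ (fderiv ℝ u) y (single j 1) (single j 1) := by
  refine Finset.sum_congr rfl fun j _ => ?_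
  have h : HasFDerivAt (partialD j u) _ y := hu.hasFDerivAt.clm_apply (hasFDerivAt_const _ _)
  rw [partialD_eq_of_hasFDerivAt h]
  simp

theorem partialD_mul (hf : DifferentiableAt ℝ f y) (hg : DifferentiableAt ℝ g y) (j : Fin n) :
    partialD j (fun z => f z * g z) y = f y * partialD j g y + g y * partialD j f y := by
  have h : HasFDerivAt (fun z => f z * g z) _ y := hf.hasFDerivAt.mul hg.hasFDerivAt
  rw [partialD_eq_of_hasFDerivAt h]
  simp [partialD]

theorem eventually_differentiableAt_of_contDiffAt_two (hu : ContDiffAt ℝ 2 u y) :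
    ∀ᶠ z in 𝓝 y, DifferentiableAt ℝ u z :=
  (hu.eventually (by simp)).mono fun _ hz => hz.differentiableAt (by norm_num)

theorem lapl_mul (hf : ContDiffAt ℝ 2 f y) (hg : ContDiffAt ℝ 2 g y) :
    lapl (fun z => f z * g z) y =
      f y * lapl g y + 2 * ∑ j, partialD j f y * partialD j g y + g y * lapl f y := by
  simp only [lapl, Finset.mul_sum, ← Finset.sum_add_distrib]
  refine Finset.sum_congr rfl fun j _ => ?_
  have hprod : partialD j (fun z => f z * g z) =ᶠ[𝓝 y]
      fun z => f z * partialD j g z + g z * partialD j f z :=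
    ((eventually_differentiableAt_of_contDiffAt_two hf).and
      (eventually_differentiableAt_of_contDiffAt_two hg)).mono fun z hz => partialD_mul hz.1 hz.2 j
  rw [partialD_congr_of_eventuallyEq hprod]
  have hf1 := hf.differentiableAt (by norm_num)
  have hg1 := hg.differentiableAt (by norm_num)
  have h : HasFDerivAt (fun z => f z * partialD j g z + g z * partialD j f z) _ y :=
    (hf1.hasFDerivAt.mul (differentiableAt_partialD hg j).hasFDerivAt).add
      (hg1.hasFDerivAt.mul (differentiableAt_partialD hf j).hasFDerivAt)
  rw [partialD_eq_of_hasFDerivAt h]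
  simp only [add_apply, smul_apply, smul_eq_mul, partialD]
  ring

end PartialDerivatives

section InnerProductSpace

variable {F : Type*} [NormedAddCommGroup F] [InnerProductSpace ℝ F] {x z : F}

theorem hasFDerivAt_norm_sub (hz : z ≠ x) :
    HasFDerivAt (fun w => ‖w - x‖) (‖z - x‖⁻¹ • innerSL ℝ (z - x)) z := by
  have h := ((hasFDerivAt_id z).sub_const x).norm_sq.sqrt
    (pow_ne_zero 2 (norm_ne_zero_iff.2 (sub_ne_zero.2 hz)))
  simp only [id, Real.sqrt_sq (norm_nonneg _)] at h
  refine h.congr_fderiv ?_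
  ext v
  simp only [one_div, mul_inv_rev, map_sub, ContinuousLinearMap.comp_id, smul_apply, sub_apply,
    coe_innerSL_apply, nsmul_eq_mul, Nat.cast_ofNat, smul_eq_mul]
  ring

theorem hasFDerivAt_inv_norm_sub_sq (hz : z ≠ x) :
    HasFDerivAt (fun w => (‖w - x‖ ^ 2)⁻¹) ((-2 / ‖z - x‖ ^ 4) • innerSL ℝ (z - x)) z := by
  have hN : ‖z - x‖ ^ 2 ≠ 0 := pow_ne_zero 2 (norm_ne_zero_iff.2 (sub_ne_zero.2 hz))
  have h := (hasDerivAt_inv hN).comp_hasFDerivAt z ((hasFDerivAt_id z).sub_const x).norm_sq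
  refine h.congr_fderiv ?_
  ext v
  simp only [id_eq, map_sub, ContinuousLinearMap.comp_id, neg_smul, neg_apply, smul_apply,
    sub_apply, coe_innerSL_apply, nsmul_eq_mul, Nat.cast_ofNat, smul_eq_mul]
  ring

theorem hasFDerivAt_div_norm_sub_rpow {lam : ℝ} (p : ℝ) (hlam : lam ≠ 0) (hz : z ≠ x) :
    HasFDerivAt (fun w => (lam / ‖w - x‖) ^ p)
      ((-p * (lam / ‖z - x‖) ^ p / ‖z - x‖ ^ 2) • innerSL ℝ (z - x)) z := by
  have hN : ‖z - x‖ ≠ 0 := norm_ne_zero_iff.2 (sub_ne_zero.2 hz)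
  have h : HasFDerivAt (fun w => (lam / ‖w - x‖) ^ p) _ z :=
    (((hasDerivAt_inv hN).const_mul lam).comp_hasFDerivAt z (hasFDerivAt_norm_sub hz)).rpow_const
      (p := p) (Or.inl (div_ne_zero hlam hN))
  refine h.congr_fderiv ?_
  ext v
  simp only [Function.comp_apply, Real.rpow_sub_one (div_ne_zero hlam hN), mul_neg, map_sub,
    neg_smul, smul_neg, neg_apply, smul_apply, sub_apply, coe_innerSL_apply, smul_eq_mul, neg_mul]
  field_simp

theorem contDiffAt_div_norm_sub_rpow {lam : ℝ} (p : ℝ) {k : WithTop ℕ∞} (hlam : lam ≠ 0)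
    (hz : z ≠ x) : ContDiffAt ℝ k (fun w => (lam / ‖w - x‖) ^ p) z := by
  have hN : ‖z - x‖ ≠ 0 := norm_ne_zero_iff.2 (sub_ne_zero.2 hz)
  exact (contDiffAt_const.div ((contDiffAt_id.sub contDiffAt_const).norm ℝ (sub_ne_zero.2 hz))
    hN).rpow_const_of_ne (div_ne_zero hlam hN)

end InnerProductSpace

section DistancePower

variable {n : ℕ} {x y : EuclideanSpace ℝ (Fin n)} {lam : ℝ}

theorem partialD_div_norm_sub_rpow (p : ℝ) (hlam : lam ≠ 0) (hy : y ≠ x) (j : Fin n) :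
    partialD j (fun w => (lam / ‖w - x‖) ^ p) y =
      -p * (lam / ‖y - x‖) ^ p * (y j - x j) / ‖y - x‖ ^ 2 := by
  rw [partialD_eq_of_hasFDerivAt (hasFDerivAt_div_norm_sub_rpow p hlam hy)]
  simp only [neg_mul, map_sub, smul_apply, sub_apply, coe_innerSL_apply, inner_single_one_right,
    smul_eq_mul]
  ring

theorem lapl_div_norm_sub_rpow (p : ℝ) (hlam : lam ≠ 0) (hy : y ≠ x) :
    lapl (fun w => (lam / ‖w - x‖) ^ p) y =
      p * (p + 2 - n) * (lam / ‖y - x‖) ^ p / ‖y - x‖ ^ 2 := by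
  have hN : ‖y - x‖ ≠ 0 := norm_ne_zero_iff.2 (sub_ne_zero.2 hy)
  have hsecond : ∀ j, partialD j (fun w => partialD j (fun w => (lam / ‖w - x‖) ^ p) w) y =
      p * (p + 2) * (lam / ‖y - x‖) ^ p / ‖y - x‖ ^ 4 * (y j - x j) ^ 2
        - p * (lam / ‖y - x‖) ^ p / ‖y - x‖ ^ 2 := by
    intro j
    have hev : (fun w => partialD j (fun w => (lam / ‖w - x‖) ^ p) w) =ᶠ[𝓝 y]
        fun w => -p * (lam / ‖w - x‖) ^ p * (w j - x j) * (‖w - x‖ ^ 2)⁻¹ :=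
      (eventually_ne_nhds hy).mono fun w hw =>
        (partialD_div_norm_sub_rpow p hlam hw j).trans (div_eq_mul_inv _ _)
    have h : HasFDerivAt (fun w => -p * (lam / ‖w - x‖) ^ p * (w j - x j) * (‖w - x‖ ^ 2)⁻¹) _ y :=
      (((hasFDerivAt_div_norm_sub_rpow p hlam hy).const_mul (-p)).mul
        ((EuclideanSpace.proj j).hasFDerivAt.sub_const (x j))).mul (hasFDerivAt_inv_norm_sub_sq hy)
    rw [partialD_congr_of_eventuallyEq hev, partialD_eq_of_hasFDerivAt h]
    simp only [neg_mul, PiLp.proj_apply, Pi.mul_apply, map_sub, neg_smul, smul_neg, smul_add,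
      add_apply, neg_apply, smul_apply, sub_apply, coe_innerSL_apply, inner_single_one_right,
      smul_eq_mul, PiLp.single_eq_same, mul_one]
    field_simp
    ring
  have hsq : ∑ j, (y j - x j) ^ 2 = ‖y - x‖ ^ 2 := by simpa using sum_sq_apply (y - x)
  rw [lapl, Finset.sum_congr rfl fun j _ => hsecond j, Finset.sum_sub_distrib, ← Finset.mul_sum,
    hsq, Finset.sum_const, Finset.card_univ, Fintype.card_fin, nsmul_eq_mul]
  field_simp

end DistancePower

section Inversion

variable {n : ℕ} {u : EuclideanSpace ℝ (Fin n) → ℝ} {x y z : EuclideanSpace ℝ (Fin n)} {lam : ℝ}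

theorem hasFDerivAt_inversion (hz : z ≠ x) :
    HasFDerivAt (inversion x lam)
      ((lam ^ 2 / ‖z - x‖ ^ 2) • (ContinuousLinearMap.id ℝ _ -
        (2 / ‖z - x‖ ^ 2) • (innerSL ℝ (z - x)).smulRight (z - x))) z := by
  have h : HasFDerivAt (inversion x lam) _ z :=
    (((hasFDerivAt_inv_norm_sub_sq hz).const_mul (lam ^ 2)).smul
      ((hasFDerivAt_id z).sub_const x)).const_add x
  refine h.congr_fderiv ?_
  ext v : 1
  simp only [map_sub, id_eq, add_apply, smul_apply, ContinuousLinearMap.id_apply,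
    ContinuousLinearMap.smulRight_apply, sub_apply, coe_innerSL_apply, smul_eq_mul]
  module

theorem contDiffAt_inversion {k : WithTop ℕ∞} (hy : y ≠ x) :
    ContDiffAt ℝ k (inversion x lam) y := by
  have hN : ‖y - x‖ ^ 2 ≠ 0 := pow_ne_zero 2 (norm_ne_zero_iff.2 (sub_ne_zero.2 hy))
  exact contDiffAt_const.add ((contDiffAt_const.div
    ((contDiffAt_id.sub contDiffAt_const).norm_sq ℝ) hN).smul (contDiffAt_id.sub contDiffAt_const))

theorem hasFDerivAt_comp_inversion (hu : DifferentiableAt ℝ u (inversion x lam z)) (hz : z ≠ x) :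
    HasFDerivAt (fun w => u (inversion x lam w))
      ((fderiv ℝ u (inversion x lam z)).comp ((lam ^ 2 / ‖z - x‖ ^ 2) •
        (ContinuousLinearMap.id ℝ _ - (2 / ‖z - x‖ ^ 2) • (innerSL ℝ (z - x)).smulRight (z - x))))
      z :=
  hu.hasFDerivAt.comp z (hasFDerivAt_inversion hz)

theorem partialD_comp_inversion (hu : DifferentiableAt ℝ u (inversion x lam z)) (hz : z ≠ x)
    (j : Fin n) :
    partialD j (fun w => u (inversion x lam w)) z =
      lam ^ 2 / ‖z - x‖ ^ 2 * (fderiv ℝ u (inversion x lam z) (single j 1) -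
        2 * (z j - x j) / ‖z - x‖ ^ 2 * fderiv ℝ u (inversion x lam z) (z - x)) := by
  rw [partialD_eq_of_hasFDerivAt (hasFDerivAt_comp_inversion hu hz)]
  simp only [ContinuousLinearMap.comp_apply, smul_apply, sub_apply, ContinuousLinearMap.id_apply,
    ContinuousLinearMap.smulRight_apply, innerSL_apply_apply, inner_single_one_right, map_smul,
    map_sub, smul_eq_mul]
  ring

theorem fderiv_comp_inversion_apply_sub (hu : DifferentiableAt ℝ u (inversion x lam z))
    (hz : z ≠ x) :
    fderiv ℝ (fun w => u (inversion x lam w)) z (z - x) =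
      -(lam ^ 2 / ‖z - x‖ ^ 2) * fderiv ℝ u (inversion x lam z) (z - x) := by
  have hN : ‖z - x‖ ≠ 0 := norm_ne_zero_iff.2 (sub_ne_zero.2 hz)
  rw [(hasFDerivAt_comp_inversion hu hz).fderiv]
  set t := z - x
  simp only [ContinuousLinearMap.comp_apply, smul_apply, sub_apply, ContinuousLinearMap.id_apply,
    ContinuousLinearMap.smulRight_apply, innerSL_apply_apply, real_inner_self_eq_norm_sq, map_smul,
    map_sub, smul_eq_mul]
  field_simp
  ring

theorem partialD_partialD_comp_inversion_add {t : EuclideanSpace ℝ (Fin n)}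
    (hu : ContDiffAt ℝ 2 u (inversion x lam (x + t))) (ht : t ≠ 0) (j : Fin n) :
    partialD j (fun w => partialD j (fun w => u (inversion x lam w)) w) (x + t) =
      (lam ^ 2 / ‖t‖ ^ 2) ^ 2 *
          fderiv ℝ (fderiv ℝ u) (inversion x lam (x + t)) (single j 1) (single j 1)
        - 2 * lam ^ 4 / ‖t‖ ^ 6 *
          (t j * fderiv ℝ (fderiv ℝ u) (inversion x lam (x + t)) t (single j 1))
        - 2 * lam ^ 4 / ‖t‖ ^ 6 *
          (t j * fderiv ℝ (fderiv ℝ u) (inversion x lam (x + t)) (single j 1) t)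
        + (4 * lam ^ 4 / ‖t‖ ^ 8 * fderiv ℝ (fderiv ℝ u) (inversion x lam (x + t)) t t
          + 8 * lam ^ 2 / ‖t‖ ^ 6 * fderiv ℝ u (inversion x lam (x + t)) t) * t j ^ 2
        - 4 * lam ^ 2 / ‖t‖ ^ 4 * (t j * fderiv ℝ u (inversion x lam (x + t)) (single j 1))
        - 2 * lam ^ 2 / ‖t‖ ^ 4 * fderiv ℝ u (inversion x lam (x + t)) t := by
  have hy : x + t ≠ x := by simpa using ht
  have hN : ‖t‖ ≠ 0 := norm_ne_zero_iff.2 ht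
  have hnear : ∀ᶠ w in 𝓝 (x + t), w ≠ x ∧ DifferentiableAt ℝ u (inversion x lam w) :=
    (eventually_ne_nhds hy).and ((hasFDerivAt_inversion hy).continuousAt.eventually
      (eventually_differentiableAt_of_contDiffAt_two hu))
  have hev : (fun w => partialD j (fun w => u (inversion x lam w)) w) =ᶠ[𝓝 (x + t)]
      fun w => lam ^ 2 * (‖w - x‖ ^ 2)⁻¹ * (fderiv ℝ u (inversion x lam w) (single j 1) -
        2 * (w j - x j) * (‖w - x‖ ^ 2)⁻¹ * fderiv ℝ u (inversion x lam w) (w - x)) :=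
    hnear.mono fun w hw => by simp only [partialD_comp_inversion hw.2 hw.1, div_eq_mul_inv]
  have hDu := (differentiableAt_fderiv_of_contDiffAt_two hu).hasFDerivAt.comp (x + t)
    (hasFDerivAt_inversion (lam := lam) hy)
  have h : HasFDerivAt (fun w => lam ^ 2 * (‖w - x‖ ^ 2)⁻¹ *
      (fderiv ℝ u (inversion x lam w) (single j 1) -
        2 * (w j - x j) * (‖w - x‖ ^ 2)⁻¹ * fderiv ℝ u (inversion x lam w) (w - x))) _ (x + t) :=
    ((hasFDerivAt_inv_norm_sub_sq hy).const_mul (lam ^ 2)).mul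
      ((hDu.clm_apply (hasFDerivAt_const _ _)).sub
        (((((EuclideanSpace.proj j).hasFDerivAt.sub_const (x j)).const_mul 2).mul
          (hasFDerivAt_inv_norm_sub_sq hy)).mul (hDu.clm_apply ((hasFDerivAt_id _).sub_const x))))
  rw [partialD_congr_of_eventuallyEq hev, partialD_eq_of_hasFDerivAt h]
  -- with the point written as `x + t`, `map_sub` cannot split `D²u (y - x)` into `D²u y - D²u x`
  simp only [ContinuousLinearMap.comp_apply, add_apply, sub_apply, smul_apply,
    ContinuousLinearMap.id_apply, ContinuousLinearMap.smulRight_apply, innerSL_apply_apply,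
    inner_single_one_right, ContinuousLinearMap.flip_apply, zero_apply, Function.comp_apply, id,
    Pi.mul_apply, PiLp.proj_apply, PiLp.single_apply, if_pos, map_smul, map_sub, smul_eq_mul,
    add_sub_cancel_left, PiLp.add_apply, map_zero]
  field_simp
  ring

theorem lapl_comp_inversion (hu : ContDiffAt ℝ 2 u (inversion x lam y)) (hy : y ≠ x) :
    lapl (fun w => u (inversion x lam w)) y =
      (lam ^ 2 / ‖y - x‖ ^ 2) ^ 2 * lapl u (inversion x lam y) -
        2 * (n - 2) * lam ^ 2 / ‖y - x‖ ^ 4 * fderiv ℝ u (inversion x lam y) (y - x) := by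
  obtain ⟨t, rfl⟩ : ∃ t, y = x + t := ⟨y - x, by abel⟩
  have ht : t ≠ 0 := by simpa using hy
  have hN : ‖t‖ ≠ 0 := norm_ne_zero_iff.2 ht
  rw [lapl, Finset.sum_congr rfl fun j _ => partialD_partialD_comp_inversion_add hu ht j,
    lapl_eq_sum_fderiv_fderiv (differentiableAt_fderiv_of_contDiffAt_two hu), add_sub_cancel_left]
  set H := fderiv ℝ (fderiv ℝ u) (inversion x lam (x + t))
  have hHt : ∑ j, t j * H (single j 1) t = H t t := by
    simpa using sum_mul_apply_single (H.flip t) t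
  simp only [Finset.sum_sub_distrib, Finset.sum_add_distrib, ← Finset.mul_sum,
    sum_mul_apply_single, hHt, sum_sq_apply, Finset.sum_const, Finset.card_univ, Fintype.card_fin,
    nsmul_eq_mul]
  field_simp
  ring

end Inversion

section Kelvin

variable {n : ℕ} {u : EuclideanSpace ℝ (Fin n) → ℝ} {x y : EuclideanSpace ℝ (Fin n)} {lam : ℝ}

theorem inversion_apply_of_apply_eq_zero {i : Fin n} (hx : x i = 0) (y : EuclideanSpace ℝ (Fin n)) :
    inversion x lam y i = lam ^ 2 / ‖y - x‖ ^ 2 * y i := by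
  simp [inversion, hx]

theorem ne_of_apply_pos_of_apply_eq_zero {i : Fin n} (hx : x i = 0) (hy : 0 < y i) : y ≠ x := by
  rintro rfl
  exact hy.ne' hx

theorem inversion_apply_pos {i : Fin n} (hx : x i = 0) (hy : 0 < y i) (hlam : lam ≠ 0) :
    0 < inversion x lam y i := by
  have hN : ‖y - x‖ ≠ 0 :=
    norm_ne_zero_iff.2 (sub_ne_zero.2 (ne_of_apply_pos_of_apply_eq_zero hx hy))
  rw [inversion_apply_of_apply_eq_zero hx]
  positivity

theorem sum_partialD_mul_partialD_comp_inversion (p : ℝ) (hlam : lam ≠ 0) (hy : y ≠ x)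
    (hu : DifferentiableAt ℝ u (inversion x lam y)) :
    ∑ j, partialD j (fun w => (lam / ‖w - x‖) ^ p) y *
        partialD j (fun w => u (inversion x lam w)) y =
      p * (lam / ‖y - x‖) ^ p * lam ^ 2 / ‖y - x‖ ^ 4 * fderiv ℝ u (inversion x lam y) (y - x) := by
  have hN : ‖y - x‖ ≠ 0 := norm_ne_zero_iff.2 (sub_ne_zero.2 hy)
  calc _ = ∑ j, -p * (lam / ‖y - x‖) ^ p / ‖y - x‖ ^ 2 *
        ((y - x) j * partialD j (fun w => u (inversion x lam w)) y) := by
        refine Finset.sum_congr rfl fun j _ => ?_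
        rw [partialD_div_norm_sub_rpow p hlam hy, PiLp.sub_apply]
        ring
    _ = _ := by
        rw [← Finset.mul_sum, sum_mul_partialD, fderiv_comp_inversion_apply_sub hu hy]
        field_simp

theorem divA_kelvin {i : Fin n} {a : ℝ} (hx : x i = 0) (hy : 0 < y i) (hlam : 0 < lam)
    (hu : ContDiffAt ℝ 2 u (inversion x lam y)) :
    divA i a (kelvin a x lam u) y =
      (lam / ‖y - x‖) ^ ((n : ℝ) + 2 - a) * divA i a u (inversion x lam y) := by
  have hyx := ne_of_apply_pos_of_apply_eq_zero hx hy
  have hN : ‖y - x‖ ≠ 0 := norm_ne_zero_iff.2 (sub_ne_zero.2 hyx)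
  set p : ℝ := n - 2 + a with hp
  have hv : ContDiffAt ℝ 2 (fun w => u (inversion x lam w)) y :=
    hu.comp y (contDiffAt_inversion hyx)
  have hf : ContDiffAt ℝ 2 (fun w => (lam / ‖w - x‖) ^ p) y :=
    contDiffAt_div_norm_sub_rpow p hlam.ne' hyx
  have hu1 : DifferentiableAt ℝ u (inversion x lam y) := hu.differentiableAt (by norm_num)
  have hKelvin : kelvin a x lam u = fun w => (lam / ‖w - x‖) ^ p * u (inversion x lam w) := rfl
  rw [divA, divA, hKelvin, lapl_mul hf hv, partialD_mul (hf.differentiableAt (by norm_num))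
    (hv.differentiableAt (by norm_num)),
    sum_partialD_mul_partialD_comp_inversion p hlam.ne' hyx hu1, lapl_comp_inversion hu hyx,
    lapl_div_norm_sub_rpow p hlam.ne' hyx, partialD_comp_inversion hu1 hyx,
    partialD_div_norm_sub_rpow p hlam.ne' hyx, inversion_apply_of_apply_eq_zero hx, hx, partialD]
  have hs : 0 < lam / ‖y - x‖ := by positivity
  have hpow : (lam / ‖y - x‖) ^ ((n : ℝ) + 2 - a) =
      (lam / ‖y - x‖) ^ p * (lam / ‖y - x‖) ^ 4 / ((lam / ‖y - x‖) ^ 2) ^ a := by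
    rw [show (n : ℝ) + 2 - a = p + 4 - 2 * a by ring, Real.rpow_sub hs, Real.rpow_add hs,
      Real.rpow_mul hs.le]
    norm_cast
  rw [hpow, ← div_pow, Real.mul_rpow (by positivity) hy.le, Real.mul_rpow (by positivity) hy.le,
    Real.rpow_sub_one (pow_ne_zero 2 hs.ne'), Real.rpow_sub_one hy.ne']
  have hA : 0 < ((lam / ‖y - x‖) ^ 2) ^ a := by positivity
  generalize ((lam / ‖y - x‖) ^ 2) ^ a = A at hA
  generalize (lam / ‖y - x‖) ^ p = F
  generalize y i ^ a = Y
  rw [hp]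
  field_simp
  ring

end Kelvin

theorem kelvin_invariance_general (n : ℕ) (a : ℝ) (i : Fin n)
    (u : EuclideanSpace ℝ (Fin n) → ℝ)
    (hu : ContDiffOn ℝ 2 u {y | 0 < y i})
    (heq : ∀ y, 0 < y i → divA i a u y = 0)
    (x : EuclideanSpace ℝ (Fin n)) (hx : x i = 0) (lam : ℝ) (hlam : 0 < lam) :
    ∀ y : EuclideanSpace ℝ (Fin n), 0 < y i → divA i a (kelvin a x lam u) y = 0 := by
  intro y hy
  have hIy := inversion_apply_pos hx hy hlam.ne'
  have hhalf : IsOpen {z : EuclideanSpace ℝ (Fin n) | 0 < z i} :=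
    isOpen_lt continuous_const (by fun_prop)
  rw [divA_kelvin hx hy hlam (hu.contDiffAt (hhalf.mem_nhds hIy)), heq _ hIy, mul_zero]

/-- **Lemma 2.1 (invariance).** If `u ∈ C²(ℝⁿ₊)` satisfies `div(yₙ^a ∇u) = 0` on `ℝⁿ₊`,
then for any `x ∈ ∂ℝⁿ₊` and `λ > 0`, the Kelvin-type transform
`u_{x,λ}(y) = (λ/|y-x|)^(n-2+a) u(x + λ²(y-x)/|y-x|²)` satisfies the same equation. -/
theorem kelvin_invariance (n : ℕ) (a : ℝ) (i : Fin n) (hi : (i : ℕ) = n - 1)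
    (u : EuclideanSpace ℝ (Fin n) → ℝ)
    (hu : ContDiffOn ℝ 2 u {y | 0 < y i})
    (heq : ∀ y, 0 < y i → divA i a u y = 0)
    (x : EuclideanSpace ℝ (Fin n)) (hx : x i = 0) (lam : ℝ) (hlam : 0 < lam) :
    ∀ y : EuclideanSpace ℝ (Fin n), 0 < y i → divA i a (kelvin a x lam u) y = 0 :=
  kelvin_invariance_general n a i u hu heq x hx lam hlam
end

section
/- Let n ≥ 2, τ > 0, and let f be a continuous function on the closure of ℝⁿ₊. Suppose that for every λ > 0, every x ∈ ∂ℝⁿ₊, and every y ∈ ℝⁿ₊ with |y−x| ≥ λ, one has (λ/|y−x|)^τ f(x + λ²(y−x)/|y−x|²) ≤ f(y). Then f depends only on the last coordinate: f(y', yₙ) = f(0', yₙ) for all (y', yₙ) ∈ ℝⁿ₊. -/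
open Real Filter
open Topology

/-! The inversion centred at `x` of radius `√μ ‖a - x‖` maps `x + μ (a - x)` back to `a`, with
conformal factor `μ^(-1/2)`. Given `a` and `b` at the same height and `t > 0`, centre it at the
boundary point `x = a + t⁻¹ (a - b) - aₙ eₙ` with `μ = 1 + t`: then `x + μ (a - x) = b + t aₙ eₙ`,
so the hypothesis gives `(1 + t)^(-τ/2) f(a) ≤ f(b + t aₙ eₙ)`. Letting `t → 0⁺` yields
`f(a) ≤ f(b)`, and exchanging `a` and `b` gives equality. -/

section Inversion

variable {n : ℕ}

theorem inversion_add_smul_sub (x a : EuclideanSpace ℝ (Fin n)) {μ : ℝ} (hμ : 0 < μ) :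
    inversion x (√μ * ‖a - x‖) (x + μ • (a - x)) = a := by
  rcases eq_or_ne a x with rfl | hax
  · simp [inversion]
  have hnorm : 0 < ‖a - x‖ := norm_pos_iff.mpr (sub_ne_zero.mpr hax)
  have hcoef : (√μ * ‖a - x‖) ^ 2 / ‖μ • (a - x)‖ ^ 2 * μ = 1 := by
    rw [norm_smul, Real.norm_of_nonneg hμ.le, mul_pow, mul_pow, Real.sq_sqrt hμ.le]
    field_simp
  rw [inversion, add_sub_cancel_left, smul_smul, hcoef, one_smul, add_sub_cancel]

theorem radius_div_norm_add_smul_sub {x a : EuclideanSpace ℝ (Fin n)} (hax : a ≠ x)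
    {μ : ℝ} (hμ : 0 < μ) :
    √μ * ‖a - x‖ / ‖x + μ • (a - x) - x‖ = (√μ)⁻¹ := by
  have hnorm : 0 < ‖a - x‖ := norm_pos_iff.mpr (sub_ne_zero.mpr hax)
  rw [add_sub_cancel_left, norm_smul, Real.norm_of_nonneg hμ.le,
    mul_div_mul_right _ _ hnorm.ne', Real.sqrt_div_self]

end Inversion

section MovingSphere

variable {n : ℕ} (τ : ℝ) (i : Fin n) (f : EuclideanSpace ℝ (Fin n) → ℝ)

def MovingSphereIneq : Prop :=
  ∀ lam : ℝ, 0 < lam → ∀ x : EuclideanSpace ℝ (Fin n), x i = 0 →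
    ∀ y : EuclideanSpace ℝ (Fin n), 0 < y i → lam ≤ ‖y - x‖ →
      (lam / ‖y - x‖) ^ τ * f (inversion x lam y) ≤ f y

variable {τ i f}

theorem MovingSphereIneq.le_add_smul_sub (h : MovingSphereIneq τ i f)
    {x a : EuclideanSpace ℝ (Fin n)} (hx : x i = 0) (ha : 0 < a i) {μ : ℝ} (hμ : 1 ≤ μ) :
    (√μ)⁻¹ ^ τ * f a ≤ f (x + μ • (a - x)) := by
  have hμ0 : 0 < μ := one_pos.trans_le hμ
  have hax : a ≠ x := fun hax => ha.ne' (hax ▸ hx)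
  have hnorm : 0 < ‖a - x‖ := norm_pos_iff.mpr (sub_ne_zero.mpr hax)
  have hpos : 0 < (x + μ • (a - x)) i := by simpa [hx] using mul_pos hμ0 ha
  have hradius : √μ * ‖a - x‖ ≤ ‖x + μ • (a - x) - x‖ := by
    rw [add_sub_cancel_left, norm_smul, Real.norm_of_nonneg hμ0.le]
    gcongr
    calc √μ ≤ √μ * √μ := le_mul_of_one_le_left (Real.sqrt_nonneg μ) (Real.one_le_sqrt.mpr hμ)
      _ = μ := Real.mul_self_sqrt hμ0.le
  have := h _ (mul_pos (Real.sqrt_pos.mpr hμ0) hnorm) x hx _ hpos hradius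
  rwa [inversion_add_smul_sub x a hμ0, radius_div_norm_add_smul_sub hax hμ0] at this

theorem MovingSphereIneq.le_add_smul_single (h : MovingSphereIneq τ i f)
    {a b : EuclideanSpace ℝ (Fin n)} (ha : 0 < a i) (hab : a i = b i) {t : ℝ} (ht : 0 < t) :
    (√(1 + t))⁻¹ ^ τ * f a ≤ f (b + (t * a i) • EuclideanSpace.single i 1) := by
  set x := a + t⁻¹ • (a - b) - a i • EuclideanSpace.single i (1 : ℝ)
  have hx : x i = 0 := by simp [x, hab]
  have hy : x + (1 + t) • (a - x) = b + (t * a i) • EuclideanSpace.single i 1 := by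
    simp only [x]
    match_scalars <;> field_simp <;> ring
  simpa [hy] using h.le_add_smul_sub hx ha (le_add_of_nonneg_right ht.le)

theorem MovingSphereIneq.le_of_apply_eq (h : MovingSphereIneq τ i f)
    (hf : ContinuousOn f {y | 0 ≤ y i})
    {a b : EuclideanSpace ℝ (Fin n)} (ha : 0 < a i) (hab : a i = b i) : f a ≤ f b := by
  have hweight : Tendsto (fun t : ℝ => (√(1 + t))⁻¹ ^ τ * f a) (𝓝[>] 0) (𝓝 (f a)) := by
    have hcont : ContinuousAt (fun t : ℝ => (√(1 + t))⁻¹ ^ τ * f a) 0 := by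
      fun_prop (disch := simp)
    simpa using hcont.tendsto.mono_left nhdsWithin_le_nhds
  have hpath : Tendsto (fun t : ℝ => b + (t * a i) • EuclideanSpace.single i 1) (𝓝[>] 0)
      (𝓝[{y | 0 ≤ y i}] b) := by
    refine tendsto_nhdsWithin_iff.mpr ⟨?_, ?_⟩
    · have : Continuous (fun t : ℝ => b + (t * a i) • EuclideanSpace.single i (1 : ℝ)) := by
        fun_prop
      simpa using this.tendsto' 0 b (by simp) |>.mono_left nhdsWithin_le_nhds
    · filter_upwards [self_mem_nhdsWithin] with t (ht : 0 < t)
      simp only [PiLp.add_apply, ← hab, PiLp.smul_apply, PiLp.single_eq_same, smul_eq_mul,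
        mul_one]
      positivity
  have hb : b ∈ {y | 0 ≤ y i} := by simpa [← hab] using ha.le
  exact le_of_tendsto_of_tendsto hweight ((hf b hb).tendsto.comp hpath)
    (eventually_nhdsWithin_of_forall fun t ht => h.le_add_smul_single ha hab ht)

end MovingSphere

theorem moving_sphere_calculus_general (n : ℕ) (τ : ℝ)
    (i : Fin n)
    (f : EuclideanSpace ℝ (Fin n) → ℝ)
    (hf : ContinuousOn f {y | 0 ≤ y i})
    (h : ∀ lam : ℝ, 0 < lam → ∀ x : EuclideanSpace ℝ (Fin n), x i = 0 →
      ∀ y : EuclideanSpace ℝ (Fin n), 0 < y i → lam ≤ ‖y - x‖ →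
        (lam / ‖y - x‖) ^ τ * f (inversion x lam y) ≤ f y) :
    ∀ y : EuclideanSpace ℝ (Fin n), 0 < y i →
      f y = f ((y i) • EuclideanSpace.single i 1) := by
  intro y hy
  have h' : MovingSphereIneq τ i f := h
  have hheight : ((y i) • EuclideanSpace.single i 1 : EuclideanSpace ℝ (Fin n)) i = y i := by
    simp
  exact le_antisymm (h'.le_of_apply_eq hf hy hheight.symm)
    (h'.le_of_apply_eq hf (by rwa [hheight]) hheight)

/-- **Lemma 3.3 (key calculus lemma for the method of moving spheres).** If
`f ∈ C⁰(closure ℝⁿ₊)`, `τ > 0`, and `(λ/|y-x|)^τ f(x + λ²(y-x)/|y-x|²) ≤ f(y)` for all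
`λ > 0`, `x ∈ ∂ℝⁿ₊` and `y ∈ ℝⁿ₊` with `|y-x| ≥ λ`, then `f` depends only on the last
coordinate: `f(y', yₙ) = f(0', yₙ)`. -/
theorem moving_sphere_calculus (n : ℕ) (hn : 2 ≤ n) (τ : ℝ) (hτ : 0 < τ)
    (i : Fin n) (hi : (i : ℕ) = n - 1)
    (f : EuclideanSpace ℝ (Fin n) → ℝ)
    (hf : ContinuousOn f {y | 0 ≤ y i})
    (h : ∀ lam : ℝ, 0 < lam → ∀ x : EuclideanSpace ℝ (Fin n), x i = 0 →
      ∀ y : EuclideanSpace ℝ (Fin n), 0 < y i → lam ≤ ‖y - x‖ →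
        (lam / ‖y - x‖) ^ τ * f (inversion x lam y) ≤ f y) :
    ∀ y : EuclideanSpace ℝ (Fin n), 0 < y i →
      f y = f ((y i) • EuclideanSpace.single i 1) :=
  moving_sphere_calculus_general n τ i f hf h
end

section
/- Let n ≥ 2 and suppose f ∈ C¹(ℝⁿ₊) satisfies, for every x ∈ ∂ℝⁿ₊, every λ > 0, and every y ∈ ℝⁿ₊, the inequality f(y) ≥ f(x + λ²(y−x)/|y−x|²) + ln(λ/|y−x|). Then f depends only on the last coordinate: f(y', yₙ) = f(0', yₙ) for all (y', yₙ) ∈ ℝⁿ₊. -/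
open Real Filter

private lemma key_ineq {n : ℕ} (i : Fin n)
    (f : EuclideanSpace ℝ (Fin n) → ℝ)
    (h : ∀ x : EuclideanSpace ℝ (Fin n), x i = 0 → ∀ lam : ℝ, 0 < lam →
      ∀ y : EuclideanSpace ℝ (Fin n), 0 < y i →
        f (inversion x lam y) + Real.log (lam / ‖y - x‖) ≤ f y)
    (y z : EuclideanSpace ℝ (Fin n)) (hy : 0 < y i) (hz : 0 < z i)
    (hne : z i ≠ y i) :
    f z + (1/2) * Real.log (z i / y i) ≤ f y := by
  set t : ℝ := z i / y i with ht
  have ht0 : 0 < t := div_pos hz hy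
  have ht1 : (1 : ℝ) - t ≠ 0 := by
    intro h1
    exact hne ((div_eq_one_iff_eq hy.ne').1 (by linarith : t = 1))
  set x : EuclideanSpace ℝ (Fin n) := (1 - t)⁻¹ • (z - t • y) with hxdef
  have htz : t * y i = z i := div_mul_cancel₀ _ hy.ne'
  have hx : x i = 0 := by
    simp only [hxdef, PiLp.smul_apply, PiLp.sub_apply, smul_eq_mul]
    rw [htz]; ring
  have hyx : y ≠ x := by
    intro hc
    rw [hc, hx] at hy
    exact lt_irrefl 0 hy
  have hnorm : 0 < ‖y - x‖ := by
    rw [norm_sub_pos_iff]; exact hyx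
  set lam : ℝ := Real.sqrt t * ‖y - x‖ with hlamdef
  have hlam : 0 < lam := mul_pos (Real.sqrt_pos.2 ht0) hnorm
  have hinv : inversion x lam y = z := by
    have hlam2 : lam ^ 2 = t * ‖y - x‖ ^ 2 := by
      rw [hlamdef, mul_pow, Real.sq_sqrt ht0.le]
    unfold inversion
    rw [hlam2, mul_div_assoc, div_self (by positivity : ‖y - x‖ ^ 2 ≠ 0), mul_one]
    have h2 : x + t • (y - x) = (1 - t) • x + t • y := by module
    rw [h2, hxdef, smul_inv_smul₀ ht1]
    module
  have hlog : Real.log (lam / ‖y - x‖) = (1/2) * Real.log t := by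
    rw [hlamdef, mul_div_assoc, div_self hnorm.ne', mul_one, Real.log_sqrt ht0.le]
    ring
  have hmain := h x hx lam hlam y hy
  rw [hinv, hlog] at hmain
  exact hmain

/-- **Lemma 3.7 (logarithmic calculus lemma for moving spheres).** If `f ∈ C¹(ℝⁿ₊)`
satisfies `f(y) ≥ f(x + λ²(y-x)/|y-x|²) + ln(λ/|y-x|)` for all `x ∈ ∂ℝⁿ₊`, `λ > 0` and
`y ∈ ℝⁿ₊`, then `f` depends only on the last coordinate: `f(y', yₙ) = f(0', yₙ)`. -/
theorem moving_sphere_log_calculus (n : ℕ) (hn : 2 ≤ n)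
    (i : Fin n) (hi : (i : ℕ) = n - 1)
    (f : EuclideanSpace ℝ (Fin n) → ℝ)
    (hf : ContDiffOn ℝ 1 f {y | 0 < y i})
    (h : ∀ x : EuclideanSpace ℝ (Fin n), x i = 0 → ∀ lam : ℝ, 0 < lam →
      ∀ y : EuclideanSpace ℝ (Fin n), 0 < y i →
        f (inversion x lam y) + Real.log (lam / ‖y - x‖) ≤ f y) :
    ∀ y : EuclideanSpace ℝ (Fin n), 0 < y i →
      f y = f ((y i) • EuclideanSpace.single i 1) := by
  intro y hy
  set p : EuclideanSpace ℝ (Fin n) := (y i) • EuclideanSpace.single i 1 with hpdef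
  set z : EuclideanSpace ℝ (Fin n) := (2 * y i) • EuclideanSpace.single i 1 with hzdef
  set w : EuclideanSpace ℝ (Fin n) := y + (y i) • EuclideanSpace.single i 1 with hwdef
  have hpi : p i = y i := by
    simp [hpdef, EuclideanSpace.single_apply]
  have hzi : z i = 2 * y i := by
    simp [hzdef, EuclideanSpace.single_apply]
  have hwi : w i = 2 * y i := by
    simp [hwdef, EuclideanSpace.single_apply]
    ring
  have hp0 : 0 < p i := by rw [hpi]; exact hy
  have hz0 : 0 < z i := by rw [hzi]; linarith
  have hw0 : 0 < w i := by rw [hwi]; linarith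
  have e1 : z i / y i = 2 := by rw [hzi]; field_simp
  have e2 : p i / z i = 2⁻¹ := by rw [hpi, hzi]; field_simp
  have e3 : w i / p i = 2 := by rw [hpi, hwi]; field_simp
  have e4 : y i / w i = 2⁻¹ := by rw [hwi]; field_simp
  have h1 := key_ineq i f h y z hy hz0 (by rw [hzi]; intro hc; linarith)
  have h2 := key_ineq i f h z p hz0 hp0 (by rw [hpi, hzi]; intro hc; linarith)
  have h3 := key_ineq i f h p w hp0 hw0 (by rw [hwi, hpi]; intro hc; linarith)
  have h4 := key_ineq i f h w y hw0 hy (by rw [hwi]; intro hc; linarith)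
  rw [e1] at h1
  rw [e2, Real.log_inv] at h2
  rw [e3] at h3
  rw [e4, Real.log_inv] at h4
  linarith
end
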